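/- arXiv:math/0509510 — 5 statements merged into one kernel-verified Lean document; each statement's English description precedes it below -/
import Mathlib

section
/- Let L be a Lie algebra with zero centre and let I be an ideal of L. Then the annihilator of I in L is zero if and only if the right annihilator of A_L(I) in A(L) is zero, where A(L) is the associative subalgebra of End(L) generated by the adjoint maps ad_x for x in L, and A_L(I) is the subalgebra generated by ad_y for y in I. -/
/-!
If `Ann_L(I) = 0` and `ad y ∘ μ = 0` for all `y ∈ I`, then every value `μ x` commutes with `I`,
so `μ = 0`. Conversely, for `a ∈ Ann_L(I)` the Jacobi identity gives `ad y ∘ ad a = 0` for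
`y ∈ I`, hence `A_L(I) · ad a = 0`; so `ad a = 0`, i.e. `a` is central, and `a = 0`.
-/

theorem NonUnitalAlgebra.mul_eq_zero_of_mem_adjoin {R A : Type*} [CommSemiring R]
    [NonUnitalSemiring A] [Module R A] [IsScalarTower R A A] [SMulCommClass R A A]
    {s : Set A} {μ : A} (hs : ∀ ν ∈ s, ν * μ = 0) {ν : A} (hν : ν ∈ adjoin R s) :
    ν * μ = 0 := by
  induction hν using NonUnitalAlgebra.adjoin_induction with
  | mem x hx => exact hs x hx
  | add x y _ _ hx hy => rw [add_mul, hx, hy, add_zero]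
  | zero => rw [zero_mul]
  | mul x y _ _ _ hy => rw [mul_assoc, hy, mul_zero]
  | smul r x _ hx => rw [smul_mul_assoc, hx, smul_zero]

namespace LieIdeal

variable {Φ L : Type*} [CommRing Φ] [LieRing L] [LieAlgebra Φ L] {I : LieIdeal Φ L}

theorem ad_mul_ad_eq_zero_of_forall_lie_eq_zero {a y : L} (ha : ∀ z ∈ I, ⁅a, z⁆ = 0)
    (hy : y ∈ I) : LieAlgebra.ad Φ L y * LieAlgebra.ad Φ L a = 0 := by
  ext z
  have hya : ⁅y, a⁆ = 0 := by rw [← lie_skew, ha y hy, neg_zero]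
  have hayz : ⁅a, ⁅y, z⁆⁆ = 0 := ha _ (lie_mem_left Φ L I y z hy)
  simp [leibniz_lie y a z, hya, hayz]

theorem eq_zero_of_forall_ad_mul_eq_zero
    (hI : ∀ a : L, (∀ y ∈ I, ⁅a, y⁆ = 0) → a = 0) {μ : Module.End Φ L}
    (hμ : ∀ y ∈ I, LieAlgebra.ad Φ L y * μ = 0) : μ = 0 := by
  ext x
  refine hI (μ x) fun y hy => ?_
  have hyμx : ⁅y, μ x⁆ = 0 := by simpa using LinearMap.congr_fun (hμ y hy) x
  rw [← lie_skew, hyμx, neg_zero]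

end LieIdeal

/-- For a Lie algebra `L` with zero centre and an ideal `I` of `L`,
`Ann_L(I) = 0` iff the right annihilator of `A_L(I)` in `A(L)` is zero. -/
theorem stmt0 {Φ : Type*} [CommRing Φ] {L : Type*} [LieRing L] [LieAlgebra Φ L]
    (hZ : ∀ x : L, (∀ y : L, ⁅x, y⁆ = 0) → x = 0)
    (I : LieIdeal Φ L) :
    (∀ a : L, (∀ y ∈ I, ⁅a, y⁆ = 0) → a = 0) ↔
      (∀ μ ∈ NonUnitalAlgebra.adjoin Φ (Set.range (LieAlgebra.ad Φ L)),
        (∀ ν ∈ NonUnitalAlgebra.adjoin Φ ((LieAlgebra.ad Φ L) '' (I : Set L)),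
          ν * μ = 0) → μ = 0) := by
  constructor
  · intro hI μ _ hμ
    exact I.eq_zero_of_forall_ad_mul_eq_zero hI fun y hy =>
      hμ _ (NonUnitalAlgebra.subset_adjoin Φ ⟨y, hy, rfl⟩)
  · intro hA a ha
    have had : LieAlgebra.ad Φ L a = 0 :=
      hA _ (NonUnitalAlgebra.subset_adjoin Φ ⟨a, rfl⟩) fun ν hν =>
        NonUnitalAlgebra.mul_eq_zero_of_mem_adjoin
          (by rintro _ ⟨y, hy, rfl⟩; exact LieIdeal.ad_mul_ad_eq_zero_of_forall_lie_eq_zero ha hy) hν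
    exact hZ a fun y => by simpa using LinearMap.congr_fun had y
end

section
/- Let L ⊆ Q be an extension of Lie algebras such that Q is a weak algebra of quotients of L, and let I be an ideal of L with Ann_L(I) = 0. Then the right annihilator of A_Q(I) in A(Q) is zero. -/
/-!
Every `μ` in the right annihilator satisfies `⁅y, μ q⁆ = 0` for all `y ∈ I`, so `μ` takes values in
`Ann_Q(I)`. That annihilator vanishes: for `q ≠ 0` in it, a weak-quotient witness `x ∈ L` gives
`0 ≠ ⁅x, q⁆ ∈ L`, and the Jacobi identity together with `⁅x, I⁆ ⊆ I` shows that `⁅x, q⁆` kills `I`,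
contradicting `Ann_L(I) = 0`.
-/

section LieRing

variable {Q : Type*} [LieRing Q]

theorem lie_lie_eq_zero_of_forall_lie_eq_zero {I : Set Q} {x q : Q}
    (hx : ∀ y ∈ I, ⁅x, y⁆ ∈ I) (hq : ∀ y ∈ I, ⁅y, q⁆ = 0) {y : Q} (hy : y ∈ I) :
    ⁅⁅x, q⁆, y⁆ = 0 := by
  have hqy : ⁅q, y⁆ = 0 := by rw [← lie_skew, hq y hy, neg_zero]
  have hqxy : ⁅q, ⁅x, y⁆⁆ = 0 := by rw [← lie_skew, hq _ (hx y hy), neg_zero]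
  rw [lie_lie, hqy, hqxy, lie_zero, sub_zero]

theorem eq_zero_of_forall_lie_eq_zero_of_weak {L I : Set Q}
    (hweak : ∀ q : Q, q ≠ 0 → ∃ x ∈ L, ⁅x, q⁆ ≠ 0 ∧ ⁅x, q⁆ ∈ L)
    (hIdeal : ∀ x ∈ L, ∀ y ∈ I, ⁅x, y⁆ ∈ I)
    (hAnn : ∀ a ∈ L, (∀ y ∈ I, ⁅a, y⁆ = 0) → a = 0)
    {q : Q} (hq : ∀ y ∈ I, ⁅y, q⁆ = 0) : q = 0 := by
  by_contra hq0
  obtain ⟨x, hxL, hxq, hxqL⟩ := hweak q hq0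
  exact hxq <| hAnn _ hxqL fun y hy ↦
    lie_lie_eq_zero_of_forall_lie_eq_zero (hIdeal x hxL) hq hy

end LieRing

theorem LieAlgebra.eq_zero_of_ad_mul_eq_zero {Φ Q : Type*} [CommRing Φ] [LieRing Q]
    [LieAlgebra Φ Q] {I : Set Q} (hI : ∀ q : Q, (∀ y ∈ I, ⁅y, q⁆ = 0) → q = 0)
    {μ : Module.End Φ Q} (hμ : ∀ y ∈ I, LieAlgebra.ad Φ Q y * μ = 0) : μ = 0 := by
  ext q
  exact hI (μ q) fun y hy ↦ LinearMap.congr_fun (hμ y hy) q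

theorem stmt4_general {Φ : Type*} [CommRing Φ] {Q : Type*} [LieRing Q] [LieAlgebra Φ Q]
    (L : LieSubalgebra Φ Q)
    (hweak : ∀ q : Q, q ≠ 0 → ∃ x ∈ L, ⁅x, q⁆ ≠ 0 ∧ ⁅x, q⁆ ∈ L)
    (I : Submodule Φ Q)
    (hIdeal : ∀ x ∈ L, ∀ y ∈ I, ⁅x, y⁆ ∈ I)
    (hAnn : ∀ a ∈ L, (∀ y ∈ I, ⁅a, y⁆ = (0 : Q)) → a = 0) :
    ∀ μ ∈ NonUnitalAlgebra.adjoin Φ (Set.range (LieAlgebra.ad Φ Q)),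
      (∀ ν ∈ NonUnitalAlgebra.adjoin Φ ((LieAlgebra.ad Φ Q) '' (I : Set Q)),
        ν * μ = 0) → μ = 0 := by
  intro μ _ hμ
  have hAnnQ : ∀ q : Q, (∀ y ∈ I, ⁅y, q⁆ = 0) → q = 0 := fun _ hq ↦
    eq_zero_of_forall_lie_eq_zero_of_weak (L := (L : Set Q)) (I := (I : Set Q))
      hweak hIdeal hAnn hq
  exact LieAlgebra.eq_zero_of_ad_mul_eq_zero hAnnQ fun y hy ↦
    hμ _ (NonUnitalAlgebra.subset_adjoin Φ ⟨y, hy, rfl⟩)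

/-- If `Q` is a weak algebra of quotients of `L` and `I` is an ideal
of `L` with `Ann_L(I) = 0`, then the right annihilator of `A_Q(I)` in `A(Q)` is
zero. -/
theorem stmt4 {Φ : Type*} [CommRing Φ] {Q : Type*} [LieRing Q] [LieAlgebra Φ Q]
    (L : LieSubalgebra Φ Q)
    (hweak : ∀ q : Q, q ≠ 0 → ∃ x ∈ L, ⁅x, q⁆ ≠ 0 ∧ ⁅x, q⁆ ∈ L)
    (I : Submodule Φ Q)
    (hIL : (I : Set Q) ⊆ L)
    (hIdeal : ∀ x ∈ L, ∀ y ∈ I, ⁅x, y⁆ ∈ I)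
    (hAnn : ∀ a ∈ L, (∀ y ∈ I, ⁅a, y⁆ = (0 : Q)) → a = 0) :
    ∀ μ ∈ NonUnitalAlgebra.adjoin Φ (Set.range (LieAlgebra.ad Φ Q)),
      (∀ ν ∈ NonUnitalAlgebra.adjoin Φ ((LieAlgebra.ad Φ Q) '' (I : Set Q)),
        ν * μ = 0) → μ = 0 :=
  stmt4_general L hweak I hIdeal hAnn
end

section
/- Let L be a semiprime Lie algebra and I an ideal of L with Ann_L(I) = 0. Then Ann_L(I^s) = 0 for every s ≥ 1, where I^s denotes the s-th power of I under the bracket (I^2 = [I,I], etc.). -/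
/-!
Let `A` be the annihilator of `[J, J]`. In a semiprime Lie algebra an ideal meets the ideals it
annihilates trivially, so `A ∩ [J, J] = 0`. The ideal `C = A ∩ J` has `[C, C] ⊆ A ∩ [J, J] = 0`,
hence `C = 0`, and then `[A, J] ⊆ A ∩ J = 0` puts `A` inside `Ann(J) = 0`. Induction on `s`.
-/

section
variable {Φ : Type*} [CommRing Φ] {L : Type*} [LieRing L] [LieAlgebra Φ L]

/-- Powers of an ideal under the bracket: `I^1 = I`, `I^{s+1} = [I^s, I^s]`
(so `I^2 = [I,I]`, etc.); here `dpow I s` is `I^{s+1}`. -/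
def dpow (I : LieIdeal Φ L) : ℕ → LieIdeal Φ L
  | 0 => I
  | s + 1 => ⁅dpow I s, dpow I s⁆

end

namespace LieIdeal

variable {Φ : Type*} [CommRing Φ] {L : Type*} [LieRing L] [LieAlgebra Φ L]

def annihilator (J : LieIdeal Φ L) : LieIdeal Φ L where
  carrier := {a | ∀ y ∈ J, ⁅a, y⁆ = 0}
  add_mem' ha hb y hy := by rw [add_lie, ha y hy, hb y hy, add_zero]
  zero_mem' y _ := zero_lie y
  smul_mem' c a ha y hy := by rw [smul_lie, ha y hy, smul_zero]
  lie_mem {z a} ha y hy := by rw [lie_lie, ha y hy, ha _ (J.lie_mem hy), lie_zero, sub_zero]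

theorem mem_annihilator {J : LieIdeal Φ L} {a : L} :
    a ∈ annihilator J ↔ ∀ y ∈ J, ⁅a, y⁆ = 0 :=
  Iff.rfl

theorem le_annihilator_iff {K J : LieIdeal Φ L} : K ≤ annihilator J ↔ ⁅K, J⁆ = ⊥ := by
  rw [LieSubmodule.lie_eq_bot_iff]
  rfl

theorem annihilator_eq_bot_iff {J : LieIdeal Φ L} :
    annihilator J = ⊥ ↔ ∀ a : L, (∀ y ∈ J, ⁅a, y⁆ = 0) → a = 0 := by
  simp only [LieSubmodule.eq_bot_iff, mem_annihilator]

theorem inf_eq_bot_of_lie_eq_bot (hsemi : ∀ J : LieIdeal Φ L, ⁅J, J⁆ = ⊥ → J = ⊥)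
    {K J : LieIdeal Φ L} (h : ⁅K, J⁆ = ⊥) : K ⊓ J = ⊥ :=
  hsemi _ <| eq_bot_iff.mpr <| h ▸ LieSubmodule.mono_lie inf_le_left inf_le_right

theorem annihilator_lie_self_eq_bot (hsemi : ∀ J : LieIdeal Φ L, ⁅J, J⁆ = ⊥ → J = ⊥)
    {J : LieIdeal Φ L} (hJ : annihilator J = ⊥) : annihilator ⁅J, J⁆ = ⊥ := by
  set A := annihilator ⁅J, J⁆
  have hA : A ⊓ ⁅J, J⁆ = ⊥ := inf_eq_bot_of_lie_eq_bot hsemi (le_annihilator_iff.mp le_rfl)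
  have hAJ : A ⊓ J = ⊥ := by
    refine hsemi _ (eq_bot_iff.mpr (hA ▸ le_inf ?_ ?_))
    · exact (LieSubmodule.mono_lie inf_le_left inf_le_right).trans (LieSubmodule.lie_le_left A J)
    · exact LieSubmodule.mono_lie inf_le_right inf_le_right
  rw [eq_bot_iff, ← hJ, le_annihilator_iff, eq_bot_iff, ← hAJ]
  exact LieSubmodule.lie_le_inf A J

end LieIdeal

/-- If `L` is a semiprime Lie algebra and `I` an ideal of `L` with
`Ann_L(I) = 0`, then `Ann_L(I^s) = 0` for every `s ≥ 1`. -/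
theorem stmt6 {Φ : Type*} [CommRing Φ] {L : Type*} [LieRing L] [LieAlgebra Φ L]
    (hsemi : ∀ J : LieIdeal Φ L, ⁅J, J⁆ = ⊥ → J = ⊥)
    (I : LieIdeal Φ L)
    (hAnn : ∀ a : L, (∀ y ∈ I, ⁅a, y⁆ = 0) → a = 0) :
    ∀ s : ℕ, ∀ a : L, (∀ y ∈ dpow I s, ⁅a, y⁆ = 0) → a = 0 := by
  intro s
  refine LieIdeal.annihilator_eq_bot_iff.mp ?_
  induction s with
  | zero => exact LieIdeal.annihilator_eq_bot_iff.mpr hAnn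
  | succ n ih => exact LieIdeal.annihilator_lie_self_eq_bot hsemi ih
end

section
/- Let A be a semiprime 2-torsion free associative algebra and Q a subalgebra of the Martindale symmetric algebra of quotients Q_s(A) containing A. Let q ∈ Q and suppose there is an essential ideal I of A with qI + Iq ⊆ A and [q,[I,I]] = 0. Then [q,I] = 0. -/
/-!
Write `d x = ⁅q, x⁆`; it is a derivation and `d [I, I] = 0`. Expanding `d ⁅v, v t⁆ = 0` and
`d ⁅v, t⁆ = 0` gives `d v · I · ⁅v, t⁆ = 0`, from which `c = ⁅v, d v⁆` satisfies `c I c = 0`.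
Semiprimeness, together with the fact that essential ideals have zero annihilators in `Q`,
kills such elements, so `⁅v, d v⁆ = 0`; linearizing (2-torsion freeness) `d v` centralizes `I`,
hence `A` and `q`. Applying `d` to `d (u v) = d u · v + u · d v` gives `2 d u · d v = 0`,
so `d x · t · d x = d x · d (t x) - d x · d t · x = 0` and `d x = 0`.
-/

section
variable (R : Type*) [NonUnitalRing R]

/-- `I` is a two-sided ideal of the subring `A` of `R`. -/
def IsIdealOfSub (A : NonUnitalSubring R) (I : AddSubgroup R) : Prop :=
  (I : Set R) ⊆ A ∧ ∀ a ∈ A, ∀ x ∈ I, a * x ∈ I ∧ x * a ∈ I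

/-- `I` is an essential ideal of the subring `A` of `R`: it meets every nonzero
ideal of `A` nontrivially. -/
def IsEssentialIdealOfSub (A : NonUnitalSubring R) (I : AddSubgroup R) : Prop :=
  IsIdealOfSub R A I ∧
    ∀ J : AddSubgroup R, IsIdealOfSub R A J → J ≠ ⊥ → ∃ x ∈ I, x ∈ J ∧ x ≠ 0

/-- The subring `A` of `R` is semiprime: no nonzero ideal of `A` has zero square. -/
def IsSemiprimeSub (A : NonUnitalSubring R) : Prop :=
  ∀ I : AddSubgroup R, IsIdealOfSub R A I → (∀ x ∈ I, ∀ y ∈ I, x * y = 0) → I = ⊥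

/-- `Q` (the ambient ring `R`) sits inside the Martindale symmetric ring of
quotients `Q_s(A)`: every element is absorbed two-sidedly into `A` by some
essential ideal, and essential ideals of `A` have zero left and right
annihilator in `R`. -/
def IsSymmetricQuotientRingOf (A : NonUnitalSubring R) : Prop :=
  (∀ q : R, ∃ I : AddSubgroup R, IsEssentialIdealOfSub R A I ∧
      ∀ x ∈ I, q * x ∈ A ∧ x * q ∈ A) ∧
    ∀ q : R, q ≠ 0 → ∀ I : AddSubgroup R, IsEssentialIdealOfSub R A I →
      (∃ x ∈ I, x * q ≠ 0) ∧ (∃ x ∈ I, q * x ≠ 0)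

end

section

variable {R : Type*} [NonUnitalRing R] {A : NonUnitalSubring R} {I : AddSubgroup R}

namespace IsIdealOfSub

theorem mem_of_mem (hI : IsIdealOfSub R A I) {x : R} (hx : x ∈ I) : x ∈ A :=
  hI.1 hx

theorem mul_mem_left (hI : IsIdealOfSub R A I) {a x : R} (ha : a ∈ A) (hx : x ∈ I) :
    a * x ∈ I :=
  (hI.2 a ha x hx).1

theorem mul_mem_right (hI : IsIdealOfSub R A I) {x a : R} (hx : x ∈ I) (ha : a ∈ A) :
    x * a ∈ I :=
  (hI.2 a ha x hx).2

theorem mul_mem (hI : IsIdealOfSub R A I) {x y : R} (hx : x ∈ I) (hy : y ∈ I) : x * y ∈ I :=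
  hI.mul_mem_left (hI.mem_of_mem hx) hy

end IsIdealOfSub

theorem isIdealOfSub_closure {S : Set R} (hSA : S ⊆ A)
    (hS : ∀ a ∈ A, ∀ s ∈ S, a * s ∈ S ∧ s * a ∈ S) :
    IsIdealOfSub R A (AddSubgroup.closure S) := by
  refine ⟨AddSubgroup.closure_le (K := A.toAddSubgroup) |>.2 hSA, fun a ha x hx => ⟨?_, ?_⟩⟩
  · exact (AddSubgroup.closure_le (K := (AddSubgroup.closure S).comap (AddMonoidHom.mulLeft a))).2
      (fun s hs => AddSubgroup.subset_closure (hS a ha s hs).1) hx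
  · exact (AddSubgroup.closure_le (K := (AddSubgroup.closure S).comap (AddMonoidHom.mulRight a))).2
      (fun s hs => AddSubgroup.subset_closure (hS a ha s hs).2) hx

theorem mul_eq_zero_of_mem_closure {S : Set R} (hS : ∀ s ∈ S, ∀ t ∈ S, s * t = 0) {x y : R}
    (hx : x ∈ AddSubgroup.closure S) (hy : y ∈ AddSubgroup.closure S) : x * y = 0 := by
  have hxS : ∀ t ∈ S, x * t = 0 := fun t ht =>
    (AddSubgroup.closure_le (K := (AddMonoidHom.mulRight t).ker)).2 (fun s hs => hS s hs t ht) hx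
  exact (AddSubgroup.closure_le (K := (AddMonoidHom.mulLeft x).ker)).2 hxS hy

namespace IsSymmetricQuotientRingOf

theorem eq_zero_of_mul_ideal_eq_zero (hQs : IsSymmetricQuotientRingOf R A)
    (hI : IsEssentialIdealOfSub R A I) {r : R} (h : ∀ y ∈ I, r * y = 0) : r = 0 := by
  by_contra hr
  obtain ⟨y, hy, hne⟩ := (hQs.2 r hr I hI).2
  exact hne (h y hy)

theorem eq_zero_of_ideal_mul_eq_zero (hQs : IsSymmetricQuotientRingOf R A)
    (hI : IsEssentialIdealOfSub R A I) {r : R} (h : ∀ y ∈ I, y * r = 0) : r = 0 := by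
  by_contra hr
  obtain ⟨y, hy, hne⟩ := (hQs.2 r hr I hI).1
  exact hne (h y hy)

end IsSymmetricQuotientRingOf

theorem IsSemiprimeSub.eq_zero_of_mul_ideal_mul_eq_zero (hsemi : IsSemiprimeSub R A)
    (hQs : IsSymmetricQuotientRingOf R A) (hI : IsEssentialIdealOfSub R A I) {c : R}
    (hc : c ∈ A) (h : ∀ t ∈ I, c * t * c = 0) : c = 0 := by
  set S : Set R := {x * c * y | (x ∈ I) (y ∈ I)}
  have hSA : S ⊆ A := by
    rintro _ ⟨x, hx, y, hy, rfl⟩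
    exact A.mul_mem (A.mul_mem (hI.1.mem_of_mem hx) hc) (hI.1.mem_of_mem hy)
  have hS : ∀ a ∈ A, ∀ s ∈ S, a * s ∈ S ∧ s * a ∈ S := by
    rintro a ha _ ⟨x, hx, y, hy, rfl⟩
    exact ⟨⟨a * x, hI.1.mul_mem_left ha hx, y, hy, by noncomm_ring⟩,
      ⟨x, hx, y * a, hI.1.mul_mem_right hy ha, by noncomm_ring⟩⟩
  have hSS : ∀ s ∈ S, ∀ s' ∈ S, s * s' = 0 := by
    rintro _ ⟨x, hx, y, hy, rfl⟩ _ ⟨x', hx', y', hy', rfl⟩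
    calc x * c * y * (x' * c * y') = x * (c * (y * x') * c) * y' := by noncomm_ring
      _ = 0 := by rw [h _ (hI.1.mul_mem hy hx'), mul_zero, zero_mul]
  have hbot : AddSubgroup.closure S = ⊥ :=
    hsemi _ (isIdealOfSub_closure hSA hS) fun _ hx _ hy => mul_eq_zero_of_mem_closure hSS hx hy
  have hxcy : ∀ x ∈ I, ∀ y ∈ I, x * c * y = 0 := fun x hx y hy =>
    AddSubgroup.mem_bot.1 (hbot ▸ AddSubgroup.subset_closure ⟨x, hx, y, hy, rfl⟩)
  exact hQs.eq_zero_of_ideal_mul_eq_zero hI fun x hx =>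
    hQs.eq_zero_of_mul_ideal_eq_zero hI (hxcy x hx)

theorem NonUnitalSubring.lie_mem {x y : R} (hx : x ∈ A) (hy : y ∈ A) : ⁅x, y⁆ ∈ A :=
  A.sub_mem (A.mul_mem hx hy) (A.mul_mem hy hx)

section Commutator

variable {q : R}

theorem lie_mem_of_mul_mem (habs : ∀ x ∈ I, q * x ∈ A ∧ x * q ∈ A) {x : R} (hx : x ∈ I) :
    ⁅q, x⁆ ∈ A :=
  A.sub_mem (habs x hx).1 (habs x hx).2

theorem lie_mul_lie_right_eq_zero (hI : IsIdealOfSub R A I)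
    (hcomm : ∀ u ∈ I, ∀ v ∈ I, Commute q ⁅u, v⁆) {v t : R} (hv : v ∈ I) (ht : t ∈ I) :
    ⁅q, v⁆ * ⁅v, t⁆ = 0 :=
  calc ⁅q, v⁆ * ⁅v, t⁆ = ⁅q, ⁅v, v * t⁆⁆ - v * ⁅q, ⁅v, t⁆⁆ := by
        simp only [Ring.lie_def]; noncomm_ring
    _ = 0 := by
        rw [(hcomm v hv _ (hI.mul_mem hv ht)).lie_eq, (hcomm v hv t ht).lie_eq, mul_zero, sub_zero]

theorem lie_lie_self_mul_lie_eq_zero (hI : IsIdealOfSub R A I)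
    (hcomm : ∀ u ∈ I, ∀ v ∈ I, Commute q ⁅u, v⁆) {v t : R} (hv : v ∈ I) (ht : t ∈ I) :
    ⁅v, ⁅q, v⁆⁆ * ⁅v, t⁆ = 0 := by
  have hw : ∀ w ∈ I, ⁅q, v⁆ * w * ⁅v, t⁆ = 0 := fun w hw =>
    calc ⁅q, v⁆ * w * ⁅v, t⁆ = ⁅q, v⁆ * ⁅v, w * t⁆ - ⁅q, v⁆ * ⁅v, w⁆ * t := by
          simp only [Ring.lie_def]; noncomm_ring
      _ = 0 := by
          rw [lie_mul_lie_right_eq_zero hI hcomm hv (hI.mul_mem hw ht),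
            lie_mul_lie_right_eq_zero hI hcomm hv hw, zero_mul, sub_zero]
  calc ⁅v, ⁅q, v⁆⁆ * ⁅v, t⁆ = v * (⁅q, v⁆ * ⁅v, t⁆) - ⁅q, v⁆ * v * ⁅v, t⁆ := by
        simp only [Ring.lie_def]; noncomm_ring
    _ = 0 := by rw [lie_mul_lie_right_eq_zero hI hcomm hv ht, hw v hv, mul_zero, sub_zero]

theorem lie_lie_self_eq_zero (hsemi : IsSemiprimeSub R A) (hQs : IsSymmetricQuotientRingOf R A)
    (hI : IsEssentialIdealOfSub R A I) (habs : ∀ x ∈ I, q * x ∈ A ∧ x * q ∈ A)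
    (hcomm : ∀ u ∈ I, ∀ v ∈ I, Commute q ⁅u, v⁆) {v : R} (hv : v ∈ I) :
    ⁅v, ⁅q, v⁆⁆ = 0 := by
  have hd : ⁅q, v⁆ ∈ A := lie_mem_of_mul_mem habs hv
  refine hsemi.eq_zero_of_mul_ideal_mul_eq_zero hQs hI (A.lie_mem (hI.1.mem_of_mem hv) hd)
    fun t ht => ?_
  calc ⁅v, ⁅q, v⁆⁆ * t * ⁅v, ⁅q, v⁆⁆
        = ⁅v, ⁅q, v⁆⁆ * ⁅v, t * ⁅q, v⁆⁆ - ⁅v, ⁅q, v⁆⁆ * ⁅v, t⁆ * ⁅q, v⁆ := by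
        simp only [Ring.lie_def]; noncomm_ring
    _ = 0 := by
        rw [lie_lie_self_mul_lie_eq_zero hI.1 hcomm hv (hI.1.mul_mem_right ht hd),
          lie_lie_self_mul_lie_eq_zero hI.1 hcomm hv ht, zero_mul, sub_zero]

theorem lie_lie_eq_zero (hsemi : IsSemiprimeSub R A) (h2 : ∀ x ∈ A, x + x = 0 → x = 0)
    (hQs : IsSymmetricQuotientRingOf R A) (hI : IsEssentialIdealOfSub R A I)
    (habs : ∀ x ∈ I, q * x ∈ A ∧ x * q ∈ A) (hcomm : ∀ u ∈ I, ∀ v ∈ I, Commute q ⁅u, v⁆)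
    {v w : R} (hv : v ∈ I) (hw : w ∈ I) : ⁅w, ⁅q, v⁆⁆ = 0 := by
  have hself := fun {x : R} (hx : x ∈ I) => lie_lie_self_eq_zero hsemi hQs hI habs hcomm hx
  refine h2 _ (A.lie_mem (hI.1.mem_of_mem hw) (lie_mem_of_mul_mem habs hv)) ?_
  calc ⁅w, ⁅q, v⁆⁆ + ⁅w, ⁅q, v⁆⁆
        = ⁅v + w, ⁅q, v + w⁆⁆ - ⁅v, ⁅q, v⁆⁆ - ⁅w, ⁅q, w⁆⁆ - ⁅q, ⁅v, w⁆⁆ := by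
        simp only [Ring.lie_def]; noncomm_ring
    _ = 0 := by
        rw [hself (I.add_mem hv hw), hself hv, hself hw, (hcomm v hv w hw).lie_eq]
        simp only [sub_self]

theorem commute_of_commute_mul (hQs : IsSymmetricQuotientRingOf R A)
    (hI : IsEssentialIdealOfSub R A I) {x p : R} (hx : ∀ z ∈ I, Commute x z)
    (hp : ∀ z ∈ I, Commute x (p * z)) : Commute x p := by
  refine sub_eq_zero.1 (hQs.eq_zero_of_mul_ideal_eq_zero hI fun z hz => ?_)
  calc (x * p - p * x) * z = x * (p * z) - p * (x * z) := by noncomm_ring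
    _ = 0 := by rw [(hp z hz).eq, (hx z hz).eq, mul_assoc, sub_self]

theorem commute_lie_self (hsemi : IsSemiprimeSub R A) (h2 : ∀ x ∈ A, x + x = 0 → x = 0)
    (hQs : IsSymmetricQuotientRingOf R A) (hI : IsEssentialIdealOfSub R A I)
    (habs : ∀ x ∈ I, q * x ∈ A ∧ x * q ∈ A) (hcomm : ∀ u ∈ I, ∀ v ∈ I, Commute q ⁅u, v⁆)
    {v : R} (hv : v ∈ I) : Commute ⁅q, v⁆ q := by
  have hI' : ∀ z ∈ I, Commute ⁅q, v⁆ z := fun z hz =>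
    (commute_iff_lie_eq.2 (lie_lie_eq_zero hsemi h2 hQs hI habs hcomm hv hz)).symm
  have hA : ∀ a ∈ A, Commute ⁅q, v⁆ a := fun a ha =>
    commute_of_commute_mul hQs hI hI' fun z hz => hI' _ (hI.1.mul_mem_left ha hz)
  exact commute_of_commute_mul hQs hI hI' fun z hz => hA _ (habs z hz).1

theorem lie_mul_lie_eq_zero (hsemi : IsSemiprimeSub R A) (h2 : ∀ x ∈ A, x + x = 0 → x = 0)
    (hQs : IsSymmetricQuotientRingOf R A) (hI : IsEssentialIdealOfSub R A I)
    (habs : ∀ x ∈ I, q * x ∈ A ∧ x * q ∈ A) (hcomm : ∀ u ∈ I, ∀ v ∈ I, Commute q ⁅u, v⁆)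
    {u v : R} (hu : u ∈ I) (hv : v ∈ I) : ⁅q, u⁆ * ⁅q, v⁆ = 0 := by
  have hqq := fun {x : R} (hx : x ∈ I) =>
    (commute_lie_self hsemi h2 hQs hI habs hcomm hx).symm.lie_eq
  refine h2 _ (A.mul_mem (lie_mem_of_mul_mem habs hu) (lie_mem_of_mul_mem habs hv)) ?_
  calc ⁅q, u⁆ * ⁅q, v⁆ + ⁅q, u⁆ * ⁅q, v⁆
        = ⁅q, ⁅q, u * v⁆⁆ - ⁅q, ⁅q, u⁆⁆ * v - u * ⁅q, ⁅q, v⁆⁆ := by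
        simp only [Ring.lie_def]; noncomm_ring
    _ = 0 := by
        rw [hqq (hI.1.mul_mem hu hv), hqq hu, hqq hv, zero_mul, mul_zero, sub_self, sub_self]

end Commutator

end

/-- Herstein-type lemma: Let `A` be a semiprime `2`-torsion free
subring of `Q` (with `A ⊆ Q ⊆ Q_s(A)`).  If `q ∈ Q` and `I` is an essential
ideal of `A` with `qI + Iq ⊆ A` and `[q,[I,I]] = 0`, then `[q,I] = 0`. -/
theorem stmt9 {R : Type*} [NonUnitalRing R] (A : NonUnitalSubring R)
    (hsemi : IsSemiprimeSub R A)
    (h2 : ∀ x ∈ A, x + x = 0 → x = 0)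
    (hQs : IsSymmetricQuotientRingOf R A)
    (q : R) (I : AddSubgroup R)
    (hIess : IsEssentialIdealOfSub R A I)
    (habs : ∀ x ∈ I, q * x ∈ A ∧ x * q ∈ A)
    (hcomm : ∀ u ∈ I, ∀ v ∈ I, q * (u * v - v * u) = (u * v - v * u) * q) :
    ∀ x ∈ I, q * x = x * q := by
  intro x hx
  have hd : ⁅q, x⁆ ∈ A := lie_mem_of_mul_mem habs hx
  refine commute_iff_lie_eq.2
    (hsemi.eq_zero_of_mul_ideal_mul_eq_zero hQs hIess hd fun t ht => ?_)
  have hprod := fun {u v : R} (hu : u ∈ I) (hv : v ∈ I) =>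
    lie_mul_lie_eq_zero hsemi h2 hQs hIess habs hcomm hu hv
  calc ⁅q, x⁆ * t * ⁅q, x⁆ = ⁅q, x⁆ * ⁅q, t * x⁆ - ⁅q, x⁆ * ⁅q, t⁆ * x := by
        simp only [Ring.lie_def]; noncomm_ring
    _ = 0 := by rw [hprod hx (hIess.1.mul_mem ht hx), hprod hx ht, zero_mul, sub_self]
end

section
/- Let L ⊆ Q be an extension of Lie algebras with L semiprime, and suppose Q is an algebra of quotients of L. Then [Q,Q] is an algebra of quotients of [L,L]. -/
/-!
For `0 ≠ q ∈ [Q,Q]` take the ideal `I` of `L` witnessing that `Q` is an algebra of quotients of `L`,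
and use `J = [I,I]`. In a semiprime `L`, `Ann_L(I) = 0` forces `Ann_L(J) = 0`: the ideal
`J ∩ Ann(J)` is abelian, hence zero, so the ideal `B = I ∩ Ann(J)`, with `[B,B] ⊆ J ∩ Ann(J)`, is
abelian and zero as well, while `[a,I] ⊆ B` for every `a ∈ Ann_L(J)`. By the Jacobi identity
`[J,q] ⊆ [L,L]`, and `[J,q] = 0` would put `[I,q] ⊆ L ∩ Ann(J) = 0`.
-/

section
variable (Φ : Type*) [CommRing Φ] (Q : Type*) [LieRing Q] [LieAlgebra Φ Q]

/-- `I` is an ideal of the subalgebra with carrier `S`. -/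
def IsIdealOf (S : Set Q) (I : Submodule Φ Q) : Prop :=
  (I : Set Q) ⊆ S ∧ ∀ x ∈ S, ∀ y ∈ I, ⁅x, y⁆ ∈ I

/-- The annihilator of `I` in the subalgebra with carrier `S` is zero. -/
def AnnZero (S : Set Q) (I : Submodule Φ Q) : Prop :=
  ∀ a ∈ S, (∀ y ∈ I, ⁅a, y⁆ = (0 : Q)) → a = 0

/-- The Lie algebra with carrier `T` is an algebra of quotients of the
subalgebra with carrier `S`. -/
def IsAlgebraOfQuotients (S T : Set Q) : Prop :=
  ∀ q ∈ T, q ≠ 0 → ∃ I : Submodule Φ Q, IsIdealOf Φ Q S I ∧ AnnZero Φ Q S I ∧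
    (∃ y ∈ I, ⁅y, q⁆ ≠ 0) ∧ ∀ y ∈ I, ⁅y, q⁆ ∈ S

/-- Semiprimeness of the subalgebra with carrier `S`. -/
def LieSemiprimeOn (S : Set Q) : Prop :=
  ∀ I : Submodule Φ Q, IsIdealOf Φ Q S I →
    (∀ a ∈ I, ∀ b ∈ I, ⁅a, b⁆ = (0 : Q)) → I = ⊥

/-- The derived subalgebra `[S,S]`: the span of brackets of elements of `S`. -/
def derivedOf (S : Set Q) : Submodule Φ Q :=
  Submodule.span Φ {z : Q | ∃ x ∈ S, ∃ y ∈ S, ⁅x, y⁆ = z}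

end

section
variable {Φ : Type*} [CommRing Φ] {Q : Type*} [LieRing Q] [LieAlgebra Φ Q]

lemma lie_mem_of_mem_span_right {s : Set Q} {M : Submodule Φ Q} (x : Q)
    (h : ∀ y ∈ s, ⁅x, y⁆ ∈ M) {y : Q} (hy : y ∈ Submodule.span Φ s) : ⁅x, y⁆ ∈ M :=
  (Submodule.span_le (p := M.comap (LieModule.toEnd Φ Q Q x))).2 h hy

lemma lie_mem_of_mem_span_left {s : Set Q} {M : Submodule Φ Q} (y : Q)
    (h : ∀ x ∈ s, ⁅x, y⁆ ∈ M) {x : Q} (hx : x ∈ Submodule.span Φ s) : ⁅x, y⁆ ∈ M := by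
  rw [← lie_skew, neg_mem_iff]
  exact lie_mem_of_mem_span_right y (fun z hz => by rw [← lie_skew, neg_mem_iff]; exact h z hz) hx

lemma lie_mem_derivedOf {S : Set Q} {x y : Q} (hx : x ∈ S) (hy : y ∈ S) :
    ⁅x, y⁆ ∈ derivedOf Φ Q S :=
  Submodule.subset_span ⟨x, hx, y, hy, rfl⟩

lemma derivedOf_le {S : Set Q} {M : Submodule Φ Q} (h : ∀ x ∈ S, ∀ y ∈ S, ⁅x, y⁆ ∈ M) :
    derivedOf Φ Q S ≤ M :=
  Submodule.span_le.2 fun _ ⟨x, hx, y, hy, hxy⟩ => hxy ▸ h x hx y hy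

lemma derivedOf_mono {S T : Set Q} (h : S ⊆ T) : derivedOf Φ Q S ≤ derivedOf Φ Q T :=
  derivedOf_le fun _ hx _ hy => lie_mem_derivedOf (h hx) (h hy)

lemma LieSubalgebra.derivedOf_le_toSubmodule (L : LieSubalgebra Φ Q) :
    derivedOf Φ Q (L : Set Q) ≤ L.toSubmodule :=
  derivedOf_le fun _ hx _ hy => L.lie_mem hx hy

lemma lie_mem_derivedOf_of_lie_mem {S : Set Q} {I : Submodule Φ Q} {q : Q}
    (hIS : (I : Set Q) ⊆ S) (hIq : ∀ y ∈ I, ⁅y, q⁆ ∈ S) :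
    ∀ y ∈ derivedOf Φ Q (I : Set Q), ⁅y, q⁆ ∈ derivedOf Φ Q S := by
  refine fun y hy => lie_mem_of_mem_span_left q ?_ hy
  rintro _ ⟨a, ha, b, hb, rfl⟩
  rw [lie_lie]
  exact sub_mem (lie_mem_derivedOf (hIS ha) (hIq b hb)) (lie_mem_derivedOf (hIS hb) (hIq a ha))

def lieAnnihilator (J : Submodule Φ Q) : Submodule Φ Q where
  carrier := {b | ∀ z ∈ J, ⁅b, z⁆ = 0}
  zero_mem' _ _ := zero_lie _
  add_mem' ha hb z hz := by rw [add_lie, ha z hz, hb z hz, add_zero]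
  smul_mem' c _ ha z hz := by rw [smul_lie, ha z hz, smul_zero]

namespace IsIdealOf

variable {S T : Set Q} {I J : Submodule Φ Q}

lemma mono (hI : IsIdealOf Φ Q S I) (hTS : T ⊆ S) (hIT : (I : Set Q) ⊆ T) :
    IsIdealOf Φ Q T I :=
  ⟨hIT, fun x hx => hI.2 x (hTS hx)⟩

lemma derivedOf_le (hI : IsIdealOf Φ Q S I) : derivedOf Φ Q (I : Set Q) ≤ I :=
  _root_.derivedOf_le fun x hx y hy => hI.2 x (hI.1 hx) y hy

lemma derivedOf (hI : IsIdealOf Φ Q S I) : IsIdealOf Φ Q S (derivedOf Φ Q (I : Set Q)) := by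
  refine ⟨fun z hz => hI.1 (hI.derivedOf_le hz), fun x hx y hy => ?_⟩
  refine lie_mem_of_mem_span_right x ?_ hy
  rintro _ ⟨a, ha, b, hb, rfl⟩
  rw [leibniz_lie]
  exact add_mem (lie_mem_derivedOf (hI.2 x hx a ha) hb) (lie_mem_derivedOf ha (hI.2 x hx b hb))

lemma lie_mem_lieAnnihilator (hJ : IsIdealOf Φ Q S J) {x b : Q} (hx : x ∈ S)
    (hb : b ∈ lieAnnihilator J) : ⁅x, b⁆ ∈ lieAnnihilator J := fun z hz => by
  rw [lie_lie, hb z hz, lie_zero, hb _ (hJ.2 x hx z hz), sub_zero]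

lemma lie_mem_lieAnnihilator' (hJ : IsIdealOf Φ Q S J) {x b : Q} (hx : x ∈ S)
    (hb : b ∈ lieAnnihilator J) : ⁅b, x⁆ ∈ lieAnnihilator J := by
  rw [← lie_skew, neg_mem_iff]
  exact hJ.lie_mem_lieAnnihilator hx hb

lemma inf_lieAnnihilator (hI : IsIdealOf Φ Q S I) (hJ : IsIdealOf Φ Q S J) :
    IsIdealOf Φ Q S (I ⊓ lieAnnihilator J) :=
  ⟨fun _ hz => hI.1 hz.1,
    fun _ hx _ hb => ⟨hI.2 _ hx _ hb.1, hJ.lie_mem_lieAnnihilator hx hb.2⟩⟩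

end IsIdealOf

lemma AnnZero.mono {S T : Set Q} {I : Submodule Φ Q} (h : AnnZero Φ Q S I) (hTS : T ⊆ S) :
    AnnZero Φ Q T I :=
  fun a ha => h a (hTS ha)

lemma AnnZero.lie_eq_zero {S : Set Q} {J : Submodule Φ Q} (hann : AnnZero Φ Q S J)
    (hJ : IsIdealOf Φ Q S J) {z q : Q} (hz : z ∈ S) (hzq : ⁅z, q⁆ ∈ S)
    (hq : ∀ y ∈ J, ⁅y, q⁆ = 0) : ⁅z, q⁆ = 0 := by
  have hqJ : q ∈ lieAnnihilator J := fun y hy => by rw [← lie_skew, hq y hy, neg_zero]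
  exact hann _ hzq (hJ.lie_mem_lieAnnihilator hz hqJ)

namespace LieSemiprimeOn

variable {S : Set Q} {I J : Submodule Φ Q}

lemma inf_lieAnnihilator_self_eq_bot (hsemi : LieSemiprimeOn Φ Q S) (hJ : IsIdealOf Φ Q S J) :
    J ⊓ lieAnnihilator J = ⊥ :=
  hsemi _ (hJ.inf_lieAnnihilator hJ) fun _ ha _ hb => by
    rw [← lie_skew, hb.2 _ ha.1, neg_zero]

lemma annZero_derivedOf (hsemi : LieSemiprimeOn Φ Q S) (hI : IsIdealOf Φ Q S I)
    (hann : AnnZero Φ Q S I) : AnnZero Φ Q S (derivedOf Φ Q (I : Set Q)) := by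
  set J := derivedOf Φ Q (I : Set Q)
  have hJ : IsIdealOf Φ Q S J := hI.derivedOf
  have hB : I ⊓ lieAnnihilator J = ⊥ := by
    refine hsemi _ (hI.inf_lieAnnihilator hJ) fun a ha b hb => ?_
    have hab : ⁅a, b⁆ ∈ J ⊓ lieAnnihilator J :=
      ⟨lie_mem_derivedOf ha.1 hb.1, hJ.lie_mem_lieAnnihilator' (hI.1 hb.1) ha.2⟩
    rwa [hsemi.inf_lieAnnihilator_self_eq_bot hJ, Submodule.mem_bot] at hab
  refine fun a haS haJ => hann a haS fun x hx => ?_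
  have hax : ⁅a, x⁆ ∈ I ⊓ lieAnnihilator J :=
    ⟨hI.2 a haS x hx, hJ.lie_mem_lieAnnihilator' (hI.1 hx) haJ⟩
  rwa [hB, Submodule.mem_bot] at hax

end LieSemiprimeOn

end

/-- If `L ⊆ Q` is an extension of Lie algebras with `L` semiprime
and `Q` an algebra of quotients of `L`, then `[Q,Q]` is an algebra of quotients
of `[L,L]`. -/
theorem stmt11 {Φ : Type*} [CommRing Φ] {Q : Type*} [LieRing Q] [LieAlgebra Φ Q]
    (L : LieSubalgebra Φ Q)
    (hsemi : LieSemiprimeOn Φ Q (L : Set Q))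
    (hquo : IsAlgebraOfQuotients Φ Q (L : Set Q) Set.univ) :
    IsAlgebraOfQuotients Φ Q (derivedOf Φ Q (L : Set Q) : Set Q)
      (derivedOf Φ Q (Set.univ : Set Q) : Set Q) := by
  intro q _ hq
  obtain ⟨I, hI, hIann, ⟨y, hyI, hyq⟩, hIq⟩ := hquo q (Set.mem_univ q) hq
  have hJ := hI.derivedOf
  have hJann := hsemi.annZero_derivedOf hI hIann
  have hLL : (derivedOf Φ Q (L : Set Q) : Set Q) ⊆ L := L.derivedOf_le_toSubmodule
  refine ⟨derivedOf Φ Q (I : Set Q), hJ.mono hLL (derivedOf_mono hI.1), hJann.mono hLL, ?_,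
    lie_mem_derivedOf_of_lie_mem hI.1 hIq⟩
  by_contra! hJq
  exact hyq (hJann.lie_eq_zero hJ (hI.1 hyI) (hIq y hyI) hJq)
end
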